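/- Let η₁, η₂, … be i.i.d. with E[η] = 0, E[η²] = 1. Set g(s) = ∑_p p^{-1-2s}, h(s) = (log log 1/s)(log log log 1/s)^{1/2}, and for θ > 0 let A_{p,θ}(s) = { |η_p| > θ (log log 1/s)^{-1} (p^{1+2s} g(s) / log log log 1/s)^{1/2} }. Then for every θ > 0 and every M : (0,e^{-e}) → ℕ with M(s) → ∞, one has lim_{s→0+} ∑_{p prime, p ≥ M(s)+1} E[|η_p| 1_{A_{p,θ}(s)}] · p^{-1/2-s} = 0. -/

import Mathlib

open MeasureTheory ProbabilityTheory Filter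

/-- `g(s) = ∑_p p^{-1-2s}`, sum over primes. -/
noncomputable def primeG (s : ℝ) : ℝ :=
  ∑' p : Nat.Primes, ((p : ℕ) : ℝ) ^ (-(1 + 2 * s))

/-- The truncation threshold
`θ (log log 1/s)^{-1} (p^{1+2s} g(s) / log log log 1/s)^{1/2}`. -/
noncomputable def thr (θ s : ℝ) (p : ℕ) : ℝ :=
  θ / Real.log (Real.log (1 / s)) *
    ((p : ℝ) ^ (1 + 2 * s) * primeG s / Real.log (Real.log (Real.log (1 / s)))) ^ (1 / 2 : ℝ)

/-!
Comparing `∑_{n ≤ e^{1/(2s)}} n^{-1-2s} ≥ 1/(2es)` with the Euler product over the primes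
`p ≤ e^{1/(2s)}` gives `g(s) ≥ ½ log(1/s) - 1`, hence `thr θ s p ≥ a(s) √p` with
`a(s) = (θ/2) (log(1/s) / (log log(1/s))³)^{1/2} → ∞`. For a fixed real `x`,
`∑_{n : a √n < |x|} |x| / √n ≤ |x| · 2|x| / a`, so after replacing each `η_p` by `η_0` and
integrating, the whole sum is at most `2 E[η_0²] / a(s) = 2 / a(s) → 0`.
-/

open Real Finset Topology

lemma inv_one_sub_le_exp_two_mul {t : ℝ} (h0 : 0 ≤ t) (h1 : t ≤ 1 / 2) :
    (1 - t)⁻¹ ≤ exp (2 * t) := by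
  have hpos : 0 < 1 - t := by linarith
  calc (1 - t)⁻¹ ≤ 2 * t + 1 := by
        rw [inv_le_iff_one_le_mul₀ hpos]; nlinarith
    _ ≤ exp (2 * t) := add_one_le_exp _

lemma tsum_smoothNumbers_le_exp_two_mul_tsum_primes {f : ℕ →* ℝ} (hsum : Summable f)
    (hf0 : ∀ n, 0 ≤ f n) (hfp : ∀ p, p.Prime → f p ≤ 1 / 2) (N : ℕ) :
    ∑' m : N.smoothNumbers, f m ≤ exp (2 * ∑' p : Nat.Primes, f p) := by
  rw [← EulerProduct.prod_primesBelow_geometric_eq_tsum_smoothNumbers hsum]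
  have hfp' : ∀ p ∈ N.primesBelow, f p ≤ 1 / 2 :=
    fun p hp => hfp p (Nat.prime_of_mem_primesBelow hp)
  have hprimes : ∑ p ∈ N.primesBelow, f p ≤ ∑' p : Nat.Primes, f p := by
    rw [← Finset.sum_subtype_of_mem f fun p hp => Nat.prime_of_mem_primesBelow hp]
    exact Summable.sum_le_tsum (f := fun p : Nat.Primes => f p) _ (fun p _ => hf0 p)
      (hsum.comp_injective Subtype.val_injective)
  calc ∏ p ∈ N.primesBelow, (1 - f p)⁻¹ ≤ ∏ p ∈ N.primesBelow, exp (2 * f p) :=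
        prod_le_prod (fun p hp => inv_nonneg.2 (by linarith [hfp' p hp]))
          fun p hp => inv_one_sub_le_exp_two_mul (hf0 p) (hfp' p hp)
    _ = exp (2 * ∑ p ∈ N.primesBelow, f p) := by rw [mul_sum, exp_sum]
    _ ≤ exp (2 * ∑' p : Nat.Primes, f p) := by gcongr

noncomputable def natRpowNeg (σ : ℝ) : ℕ →* ℝ where
  toFun n := (n : ℝ) ^ (-σ)
  map_one' := by simp
  map_mul' m n := by push_cast; exact mul_rpow (Nat.cast_nonneg m) (Nat.cast_nonneg n)

lemma natRpowNeg_prime_le_half {σ : ℝ} (hσ : 1 ≤ σ) {p : ℕ} (hp : p.Prime) :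
    natRpowNeg σ p ≤ 1 / 2 := by
  have h2p : (2 : ℝ) ≤ p := by exact_mod_cast hp.two_le
  calc (p : ℝ) ^ (-σ) ≤ (p : ℝ) ^ (-1 : ℝ) :=
        rpow_le_rpow_of_exponent_le (by linarith) (by linarith)
    _ ≤ 1 / 2 := by rw [rpow_neg_one, one_div]; exact inv_anti₀ two_pos h2p

lemma inv_exp_one_mul_le_sum_Icc_rpow {ε : ℝ} (hε : 0 < ε) :
    (exp 1 * ε)⁻¹ ≤ ∑ n ∈ Icc 1 ⌊exp ε⁻¹⌋₊, (n : ℝ) ^ (-(1 + ε)) := by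
  set N := ⌊exp ε⁻¹⌋₊
  have hterm : ∀ n ∈ Icc 1 N, (exp 1)⁻¹ * (n : ℝ)⁻¹ ≤ (n : ℝ) ^ (-(1 + ε)) := by
    intro n hn
    have hn0 : (0 : ℝ) < n := by exact_mod_cast (mem_Icc.1 hn).1
    have hnN : (n : ℝ) ≤ exp ε⁻¹ :=
      (Nat.cast_le.2 (mem_Icc.1 hn).2).trans (Nat.floor_le (exp_pos _).le)
    have : (exp 1)⁻¹ ≤ (n : ℝ) ^ (-ε) := by
      calc (exp 1)⁻¹ = exp ε⁻¹ ^ (-ε) := by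
            rw [← exp_mul, ← exp_neg]; congr 1; field_simp
        _ ≤ (n : ℝ) ^ (-ε) := rpow_le_rpow_of_nonpos hn0 hnN (by linarith)
    rw [neg_add, rpow_add hn0, rpow_neg_one, mul_comm ((n : ℝ)⁻¹)]
    exact mul_le_mul_of_nonneg_right this (inv_nonneg.2 hn0.le)
  have hharm : ε⁻¹ ≤ ∑ n ∈ Icc 1 N, (n : ℝ)⁻¹ := by
    calc ε⁻¹ = log (exp ε⁻¹) := (log_exp _).symm
      _ ≤ log (N + 1) := log_le_log (exp_pos _) (Nat.lt_floor_add_one _).le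
      _ ≤ harmonic N := by exact_mod_cast log_add_one_le_harmonic N
      _ = ∑ n ∈ Icc 1 N, (n : ℝ)⁻¹ := by rw [harmonic_eq_sum_Icc]; push_cast; rfl
  calc (exp 1 * ε)⁻¹ = (exp 1)⁻¹ * ε⁻¹ := mul_inv _ _
    _ ≤ (exp 1)⁻¹ * ∑ n ∈ Icc 1 N, (n : ℝ)⁻¹ := by gcongr
    _ ≤ _ := by rw [mul_sum]; exact sum_le_sum hterm

lemma half_log_one_div_sub_one_le_primeG {s : ℝ} (hs : 0 < s) :
    log (1 / s) / 2 - 1 ≤ primeG s := by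
  set σ := 1 + 2 * s
  have hsum : Summable (natRpowNeg σ) := summable_nat_rpow.2 (by linarith)
  have hf0 : ∀ n, 0 ≤ natRpowNeg σ n := fun n => rpow_nonneg (Nat.cast_nonneg n) _
  set N := ⌊exp (2 * s)⁻¹⌋₊
  have hsmooth :
      ∑ n ∈ Icc 1 N, natRpowNeg σ n ≤ ∑' m : (N + 1).smoothNumbers, natRpowNeg σ m := by
    rw [← sum_subtype_of_mem _ fun n hn => Nat.mem_smoothNumbers_of_lt (mem_Icc.1 hn).1
      (Nat.lt_succ_of_le (mem_Icc.1 hn).2)]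
    exact Summable.sum_le_tsum (f := fun m : (N + 1).smoothNumbers => natRpowNeg σ m) _
      (fun m _ => hf0 m) (hsum.comp_injective Subtype.val_injective)
  have hexp : (exp 1 * (2 * s))⁻¹ ≤ exp (2 * primeG s) :=
    calc (exp 1 * (2 * s))⁻¹ ≤ ∑ n ∈ Icc 1 N, natRpowNeg σ n :=
          inv_exp_one_mul_le_sum_Icc_rpow (by positivity)
      _ ≤ _ := hsmooth
      _ ≤ exp (2 * primeG s) := tsum_smoothNumbers_le_exp_two_mul_tsum_primes hsum hf0
          (fun p hp => natRpowNeg_prime_le_half (by linarith) hp) _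
  have hlog := log_le_log (by positivity) hexp
  rw [log_exp, log_inv, log_mul (exp_pos 1).ne' (by positivity), log_exp,
    log_mul two_ne_zero hs.ne'] at hlog
  rw [one_div, log_inv]
  linarith [log_two_lt_d9]

noncomputable def thrScale (θ s : ℝ) : ℝ := θ / 2 * √(log (1 / s) / log (log (1 / s)) ^ 3)

lemma thrScale_pos {θ s : ℝ} (hθ : 0 < θ) (hL : 4 ≤ log (1 / s)) : 0 < thrScale θ s :=
  mul_pos (half_pos hθ) (sqrt_pos.2 (div_pos (by linarith) (pow_pos (log_pos (by linarith)) 3)))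

lemma thrScale_mul_sqrt_le_thr {θ s : ℝ} (hθ : 0 ≤ θ) (hs : 0 < s) (hL : 4 ≤ log (1 / s))
    (p : ℕ) :
    thrScale θ s * √p ≤ thr θ s p := by
  set L := log (1 / s)
  set LL := log L
  set LLL := log LL
  have hLL : 1 < LL := by
    rw [lt_log_iff_exp_lt (by linarith)]; linarith [exp_one_lt_d9]
  have hLLL : 0 < LLL := log_pos hLL
  have hg : L / 4 ≤ primeG s := by linarith [half_log_one_div_sub_one_le_primeG hs]
  have hp : (p : ℝ) ≤ (p : ℝ) ^ (1 + 2 * s) := by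
    rcases Nat.eq_zero_or_pos p with rfl | hp
    · simp [zero_rpow (by positivity : (1 + 2 * s) ≠ 0)]
    · exact self_le_rpow_of_one_le (by exact_mod_cast hp) (by linarith)
  have hinner : p * (L / 4 / LL) ≤ (p : ℝ) ^ (1 + 2 * s) * primeG s / LLL := by
    rw [mul_div_assoc]
    exact mul_le_mul hp (div_le_div₀ (by linarith) hg hLLL (log_le_self (by linarith)))
      (by positivity) (by positivity)
  have hsqrt : √(L / LL ^ 3) = 2 / LL * √(L / 4 / LL) := by
    rw [show L / LL ^ 3 = (2 / LL) ^ 2 * (L / 4 / LL) by field_simp; ring,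
      sqrt_mul (sq_nonneg _), sqrt_sq (by positivity)]
  calc thrScale θ s * √p = θ / LL * √(p * (L / 4 / LL)) := by
        rw [thrScale, hsqrt, sqrt_mul (Nat.cast_nonneg _)]; field_simp
    _ ≤ thr θ s p := by
        rw [thr, ← sqrt_eq_rpow]
        gcongr

lemma tendsto_two_div_thrScale {θ : ℝ} (hθ : 0 < θ) :
    Tendsto (fun s => 2 / thrScale θ s) (𝓝[>] 0) (𝓝 0) := by
  have hL : Tendsto (fun s : ℝ => log (1 / s)) (𝓝[>] 0) atTop := by
    simpa only [one_div, Function.comp_def] using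
      tendsto_log_atTop.comp (tendsto_inv_nhdsGT_zero (𝕜 := ℝ))
  have hphi : Tendsto (fun u => log u ^ 3 / u) atTop (𝓝 0) := by
    simpa using tendsto_pow_log_div_mul_add_atTop 1 0 3 one_ne_zero
  have hlim := ((continuous_sqrt.tendsto 0).comp (hphi.comp hL)).const_mul (4 / θ)
  rw [sqrt_zero, mul_zero] at hlim
  refine hlim.congr fun s => ?_
  change 4 / θ * √(log (log (1 / s)) ^ 3 / log (1 / s)) = 2 / thrScale θ s
  rw [thrScale, ← inv_div (log (1 / s)), sqrt_inv]
  field_simp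
  ring

noncomputable def truncAbs (t x : ℝ) : ℝ := if t < |x| then |x| else 0

lemma truncAbs_nonneg (t x : ℝ) : 0 ≤ truncAbs t x := by
  unfold truncAbs; split_ifs <;> simp

lemma truncAbs_le_abs (t x : ℝ) : truncAbs t x ≤ |x| := by
  unfold truncAbs; split_ifs <;> simp

lemma truncAbs_anti {t t' : ℝ} (h : t ≤ t') (x : ℝ) : truncAbs t' x ≤ truncAbs t x := by
  unfold truncAbs
  split_ifs <;> first | rfl | exact abs_nonneg x | linarith

lemma measurable_truncAbs (t : ℝ) : Measurable (truncAbs t) :=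
  Measurable.ite (measurableSet_lt measurable_const measurable_abs) measurable_abs measurable_const

lemma sum_range_inv_sqrt_le (K : ℕ) : ∑ n ∈ range (K + 1), (√n)⁻¹ ≤ 2 * √K := by
  induction K with
  | zero => simp
  | succ K ih =>
    rw [sum_range_succ]
    have hK : 0 < √(K + 1 : ℝ) := sqrt_pos.2 (by positivity)
    have hamgm : √K * √(K + 1 : ℝ) ≤ K + 1 / 2 := by
      nlinarith [sq_sqrt (Nat.cast_nonneg K), sq_sqrt (by positivity : (0 : ℝ) ≤ K + 1),
        sq_nonneg (√K - √(K + 1 : ℝ))]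
    have hstep : (√(K + 1 : ℝ))⁻¹ ≤ 2 * √(K + 1 : ℝ) - 2 * √K := by
      rw [inv_le_iff_one_le_mul₀ hK]
      nlinarith [sq_sqrt (by positivity : (0 : ℝ) ≤ K + 1)]
    push_cast
    linarith

lemma sum_filter_inv_sqrt_le {a y : ℝ} (ha : 0 < a) (hy : 0 ≤ y) (F : Finset ℕ) :
    ∑ n ∈ F with a * √(n : ℕ) < y, (√n)⁻¹ ≤ 2 * y / a := by
  set K := ⌊(y / a) ^ 2⌋₊
  have hsub : {n ∈ F | a * √(n : ℕ) < y} ⊆ range (K + 1) := by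
    intro n hn
    have hlt : √n < y / a := by rw [lt_div_iff₀ ha, mul_comm]; exact (mem_filter.1 hn).2
    have : (n : ℝ) ≤ (y / a) ^ 2 := by
      rw [← sq_sqrt (Nat.cast_nonneg n)]; gcongr
    exact mem_range.2 (Nat.lt_succ_of_le (Nat.le_floor this))
  calc ∑ n ∈ F with a * √(n : ℕ) < y, (√n)⁻¹ ≤ ∑ n ∈ range (K + 1), (√n)⁻¹ :=
        sum_le_sum_of_subset_of_nonneg hsub fun n _ _ => inv_nonneg.2 (sqrt_nonneg _)
    _ ≤ 2 * √K := sum_range_inv_sqrt_le K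
    _ ≤ 2 * (y / a) := by
        gcongr
        exact (sqrt_le_sqrt (Nat.floor_le (sq_nonneg _))).trans_eq (sqrt_sq (by positivity))
    _ = 2 * y / a := by ring

lemma sum_truncAbs_div_sqrt_le {a : ℝ} (ha : 0 < a) (F : Finset ℕ) (x : ℝ) :
    ∑ n ∈ F, truncAbs (a * √n) x / √n ≤ 2 / a * x ^ 2 := by
  calc ∑ n ∈ F, truncAbs (a * √n) x / √n
        = |x| * ∑ n ∈ F with a * √(n : ℕ) < |x|, (√n)⁻¹ := by
        rw [sum_filter, mul_sum]
        refine sum_congr rfl fun n _ => ?_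
        unfold truncAbs; split_ifs <;> simp [div_eq_mul_inv]
    _ ≤ |x| * (2 * |x| / a) := by gcongr; exact sum_filter_inv_sqrt_le ha (abs_nonneg x) F
    _ = 2 / a * x ^ 2 := by rw [← sq_abs x]; ring

section Truncation

variable {Ω : Type*} [MeasurableSpace Ω] {μ : Measure Ω} {X : Ω → ℝ}

lemma MeasureTheory.Integrable.truncAbs (hX : Integrable X μ) (t : ℝ) :
    Integrable (fun ω => truncAbs t (X ω)) μ :=
  hX.abs.mono' ((measurable_truncAbs t).comp_aemeasurable hX.aemeasurable).aestronglyMeasurable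
    (ae_of_all _ fun ω => by
      rw [norm_of_nonneg (truncAbs_nonneg _ _)]; exact truncAbs_le_abs _ _)

lemma sum_integral_truncAbs_div_sqrt_le (hX : Integrable X μ)
    (hX2 : Integrable (fun ω => X ω ^ 2) μ) {a : ℝ} (ha : 0 < a) (F : Finset ℕ) :
    ∑ n ∈ F, (∫ ω, truncAbs (a * √n) (X ω) ∂μ) / √n ≤ 2 / a * ∫ ω, X ω ^ 2 ∂μ := by
  simp_rw [← integral_div, ← integral_const_mul]
  rw [← integral_finsetSum _ fun n _ => (hX.truncAbs _).div_const _]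
  exact integral_mono (integrable_finsetSum _ fun n _ => (hX.truncAbs _).div_const _)
    (hX2.const_mul _) fun ω => sum_truncAbs_div_sqrt_le ha F (X ω)

lemma ProbabilityTheory.IdentDistrib.integral_truncAbs_le {Y : Ω → ℝ}
    (hYX : IdentDistrib Y X μ μ) (hX : Integrable X μ) {t t' : ℝ} (ht : t' ≤ t) :
    ∫ ω, truncAbs t (Y ω) ∂μ ≤ ∫ ω, truncAbs t' (X ω) ∂μ := by
  calc ∫ ω, truncAbs t (Y ω) ∂μ = ∫ ω, truncAbs t (X ω) ∂μ :=
        (hYX.comp (measurable_truncAbs t)).integral_eq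
    _ ≤ ∫ ω, truncAbs t' (X ω) ∂μ :=
        integral_mono (hX.truncAbs t) (hX.truncAbs t') fun ω => truncAbs_anti ht _

lemma rpow_neg_half_add_le_inv_sqrt {x s : ℝ} (hx : 1 ≤ x) (hs : 0 ≤ s) :
    x ^ (-(1 / 2 + s)) ≤ (√x)⁻¹ := by
  rw [sqrt_eq_rpow, ← rpow_neg (by linarith)]
  exact rpow_le_rpow_of_exponent_le hx (by linarith)

lemma ite_integral_truncAbs_mul_rpow_le {Y : Ω → ℝ} (hYX : IdentDistrib Y X μ μ)
    (hX : Integrable X μ) (P : Prop) [Decidable P] {t t' s x : ℝ} (ht : t' ≤ t) (hs : 0 ≤ s)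
    (hx : 1 ≤ x) :
    (if P then (∫ ω, truncAbs t (Y ω) ∂μ) * x ^ (-(1 / 2 + s)) else 0) ≤
      (∫ ω, truncAbs t' (X ω) ∂μ) / √x := by
  have hint : 0 ≤ ∫ ω, truncAbs t' (X ω) ∂μ := integral_nonneg fun ω => truncAbs_nonneg _ _
  split_ifs
  · exact mul_le_mul (hYX.integral_truncAbs_le hX ht) (rpow_neg_half_add_le_inv_sqrt hx hs)
      (rpow_nonneg (by linarith) _) hint
  · exact div_nonneg hint (sqrt_nonneg x)

end Truncation

theorem truncated_expectation_sum_tendsto_zero_general {Ω : Type*} [MeasureSpace Ω]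
    [IsProbabilityMeasure (ℙ : Measure Ω)]
    (η : ℕ → Ω → ℝ)
    (hident : ∀ i, IdentDistrib (η i) (η 0) ℙ ℙ)
    (hvar : ∫ ω, (η 0 ω) ^ 2 ∂(ℙ : Measure Ω) = 1)
    (θ : ℝ) (hθ : 0 < θ)
    (M : ℝ → ℕ) :
    Tendsto (fun s : ℝ =>
        ∑' p : Nat.Primes,
          if M s + 1 ≤ (p : ℕ) then
            (∫ ω, (if thr θ s p < |η p ω| then |η p ω| else 0) ∂(ℙ : Measure Ω)) *
              ((p : ℕ) : ℝ) ^ (-(1 / 2 + s))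
          else 0)
      (nhdsWithin 0 (Set.Ioi 0)) (nhds 0) := by
  have hX2 : Integrable (fun ω => η 0 ω ^ 2) ℙ :=
    Integrable.of_integral_ne_zero (by rw [hvar]; exact one_ne_zero)
  have hX : Integrable (η 0) ℙ :=
    ((memLp_two_iff_integrable_sq (hident 0).aemeasurable_fst.aestronglyMeasurable).2
      hX2).integrable one_le_two
  refine squeeze_zero' (Eventually.of_forall fun s => tsum_nonneg fun p => ?_) ?_
    (tendsto_two_div_thrScale hθ)
  · split_ifs
    · exact mul_nonneg (integral_nonneg fun ω => truncAbs_nonneg _ _)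
        (rpow_nonneg (Nat.cast_nonneg _) _)
    · exact le_rfl
  filter_upwards [Ioo_mem_nhdsGT (exp_pos (-4))] with s ⟨hs, hs4⟩
  have hL : 4 ≤ log (1 / s) := by
    rw [one_div, log_inv, le_neg, ← log_exp (-4)]
    exact (log_lt_log hs hs4).le
  have ha := thrScale_pos hθ hL
  refine tsum_le_of_sum_le' (div_nonneg zero_le_two ha.le) fun F => ?_
  calc _ ≤ ∑ p ∈ F, (∫ ω, truncAbs (thrScale θ s * √(p : ℕ)) (η 0 ω)) / √(p : ℕ) :=
        sum_le_sum fun p _ => ite_integral_truncAbs_mul_rpow_le (hident p) hX _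
          (thrScale_mul_sqrt_le_thr hθ.le hs hL p) hs.le (by exact_mod_cast p.prop.one_lt.le)
    _ = ∑ n ∈ F.map (Function.Embedding.subtype Nat.Prime),
          (∫ ω, truncAbs (thrScale θ s * √(n : ℕ)) (η 0 ω)) / √(n : ℕ) := by
        -- `erw`: `Nat.Primes` unfolds to `{p // p.Prime}` only at default transparency
        erw [sum_map]; rfl
    _ ≤ 2 / thrScale θ s * ∫ ω, η 0 ω ^ 2 := sum_integral_truncAbs_div_sqrt_le hX hX2 ha _
    _ = 2 / thrScale θ s := by rw [hvar, mul_one]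

/-- Lemma 3, relation (4.2): for every `θ > 0` and `M(s) → ∞`,
`∑_{p ≥ M(s)+1} E[|η_p| 1_{A_{p,θ}(s)}] p^{-1/2-s} → 0` as `s → 0+`. -/
theorem truncated_expectation_sum_tendsto_zero {Ω : Type*} [MeasureSpace Ω]
    [IsProbabilityMeasure (ℙ : Measure Ω)]
    (η : ℕ → Ω → ℝ) (hmeas : ∀ i, Measurable (η i))
    (hindep : iIndepFun η ℙ)
    (hident : ∀ i, IdentDistrib (η i) (η 0) ℙ ℙ)
    (hmean : ∫ ω, η 0 ω ∂(ℙ : Measure Ω) = 0)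
    (hvar : ∫ ω, (η 0 ω) ^ 2 ∂(ℙ : Measure Ω) = 1)
    (θ : ℝ) (hθ : 0 < θ)
    (M : ℝ → ℕ) (hM : Tendsto M (nhdsWithin 0 (Set.Ioi 0)) atTop) :
    Tendsto (fun s : ℝ =>
        ∑' p : Nat.Primes,
          if M s + 1 ≤ (p : ℕ) then
            (∫ ω, (if thr θ s p < |η p ω| then |η p ω| else 0) ∂(ℙ : Measure Ω)) *
              ((p : ℕ) : ℝ) ^ (-(1 / 2 + s))
          else 0)
      (nhdsWithin 0 (Set.Ioi 0)) (nhds 0) :=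
  truncated_expectation_sum_tendsto_zero_general η hident hvar θ hθ M
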